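/- The circle family C_{(γ,λ)} admits an envelope if and only if it is creative. -/

import Mathlib

noncomputable section

/-- The Euclidean plane. -/
abbrev Plane := EuclideanSpace ℝ (Fin 2)

/-- The standard scalar (dot) product on the plane. -/
def dotp (x y : Plane) : ℝ := inner ℝ x y

/-- The vector with coordinates `a`, `b`. -/
def vec2 (a b : ℝ) : Plane := (WithLp.equiv 2 (Fin 2 → ℝ)).symm ![a, b]

/-- Anti-clockwise rotation by π/2. -/
def rotJ (v : Plane) : Plane := vec2 (-(v 1)) (v 0)

/-- `f` is an envelope of the circle family with center curve `γ` and radius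
function `r`, on the parameter set `I`. -/
def IsEnvelope (I : Set ℝ) (γ : ℝ → Plane) (r : ℝ → ℝ) (f : ℝ → Plane) : Prop :=
  ContDiffOn ℝ (⊤ : ℕ∞) f I ∧
    ∀ t ∈ I, ‖f t - γ t‖ = r t ∧ dotp (deriv f t) (f t - γ t) = 0

lemma dotp_apply (x y : Plane) : dotp x y = x 0 * y 0 + x 1 * y 1 := by
  simp [dotp, PiLp.inner_apply, Fin.sum_univ_two, RCLike.inner_apply, mul_comm]

lemma key_id (p q a b c d : ℝ) (h1 : p*a + q*b = 0) (h2 : a*a + b*b = 1) :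
    p*c + q*d = (-(p*b) + q*a) * (-(c*b) + d*a) := by
  linear_combination (c*a+d*b)*h1 - (p*c+q*d)*h2

/-- Decomposition identity in the plane. -/
lemma key (u w n : Plane) (h1 : dotp u n = 0) (h2 : ‖n‖ = 1) :
    dotp u w = dotp u (rotJ n) * dotp w (rotJ n) := by
  have hnn : dotp n n = 1 := by
    rw [dotp, real_inner_self_eq_norm_sq, h2]; norm_num
  rw [dotp_apply] at h1 hnn
  have h0 : rotJ n 0 = -(n 1) := rfl
  have h1' : rotJ n 1 = n 0 := rfl
  rw [dotp_apply, dotp_apply, dotp_apply, h0, h1']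
  have := key_id (u 0) (u 1) (n 0) (n 1) (w 0) (w 1) h1 hnn
  linarith [this]

lemma diffAt {E : Type*} [NormedAddCommGroup E] [NormedSpace ℝ E]
    {I : Set ℝ} (hI : IsOpen I) {g : ℝ → E} (hg : ContDiffOn ℝ (⊤ : ℕ∞) g I)
    {t : ℝ} (ht : t ∈ I) : DifferentiableAt ℝ g t :=
  (hg.contDiffAt (hI.mem_nhds ht)).differentiableAt (by simp)

theorem envelope_iff_creative (I : Set ℝ) (hIopen : IsOpen I) (hIconn : I.OrdConnected)
    (γ ν : ℝ → Plane) (r : ℝ → ℝ)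
    (hγ : ContDiffOn ℝ (⊤ : ℕ∞) γ I) (hν : ContDiffOn ℝ (⊤ : ℕ∞) ν I)
    (hνunit : ∀ t ∈ I, ‖ν t‖ = 1)
    (hfrontal : ∀ t ∈ I, dotp (deriv γ t) (ν t) = 0)
    (hr : ContDiffOn ℝ (⊤ : ℕ∞) r I) (hrpos : ∀ t ∈ I, 0 < r t) :
    (∃ f : ℝ → Plane, IsEnvelope I γ r f) ↔
    (∃ ντ : ℝ → Plane, ContDiffOn ℝ (⊤ : ℕ∞) ντ I ∧ (∀ t ∈ I, ‖ντ t‖ = 1) ∧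
      ∀ t ∈ I,
        deriv r t = -(dotp (deriv γ t) (rotJ (ν t))) * dotp (ντ t) (rotJ (ν t))) := by
  have hrne : ∀ t ∈ I, r t ≠ 0 := fun t ht => (hrpos t ht).ne'
  constructor
  · rintro ⟨f, hf, hfprop⟩
    refine ⟨fun t => (r t)⁻¹ • (f t - γ t), (hr.inv hrne).smul (hf.sub hγ), ?_, ?_⟩
    · intro t ht
      have h1 := (hfprop t ht).1
      rw [norm_smul, Real.norm_eq_abs, abs_of_pos (inv_pos.2 (hrpos t ht)), h1,
        inv_mul_cancel₀ (hrne t ht)]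
    · intro t ht
      have hft := diffAt hIopen hf ht
      have hγt := diffAt hIopen hγ ht
      have hrt := diffAt hIopen hr ht
      have hsub := hft.hasDerivAt.sub hγt.hasDerivAt
      have hD : HasDerivAt (fun s => (inner ℝ (f s - γ s) (f s - γ s) : ℝ))
          (inner ℝ (f t - γ t) (deriv f t - deriv γ t)
            + inner ℝ (deriv f t - deriv γ t) (f t - γ t)) t :=
        HasDerivAt.inner ℝ hsub hsub
      have hD2 : HasDerivAt (fun s => r s ^ 2) (2 * r t * deriv r t) t := by
        have := hrt.hasDerivAt.fun_pow 2
        simpa [mul_comm, mul_assoc, mul_left_comm] using this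
      have heq : (fun s => (inner ℝ (f s - γ s) (f s - γ s) : ℝ)) =ᶠ[nhds t]
          (fun s => r s ^ 2) := by
        filter_upwards [hIopen.mem_nhds ht] with s hs
        rw [real_inner_self_eq_norm_sq, (hfprop s hs).1]
      have hderiv_eq :
          inner ℝ (f t - γ t) (deriv f t - deriv γ t)
            + (inner ℝ (deriv f t - deriv γ t) (f t - γ t) : ℝ) = 2 * r t * deriv r t := by
        rw [← hD.deriv, ← hD2.deriv]
        exact heq.deriv_eq
      have hcomm : (inner ℝ (f t - γ t) (deriv f t - deriv γ t) : ℝ)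
          = inner ℝ (deriv f t - deriv γ t) (f t - γ t) := real_inner_comm _ _
      have hmain : dotp (deriv γ t) (f t - γ t) = -(r t * deriv r t) := by
        have h0 := (hfprop t ht).2
        rw [dotp] at h0 ⊢
        rw [hcomm] at hderiv_eq
        rw [inner_sub_left, h0] at hderiv_eq
        linarith
      have hkey := key (deriv γ t) (f t - γ t) (ν t) (hfrontal t ht) (hνunit t ht)
      rw [hkey] at hmain
      have hsm : dotp ((r t)⁻¹ • (f t - γ t)) (rotJ (ν t))
          = (r t)⁻¹ * dotp (f t - γ t) (rotJ (ν t)) := by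
        rw [dotp, dotp, real_inner_smul_left]
      rw [hsm]
      have hrne' := hrne t ht
      field_simp
      nlinarith [hmain]
  · rintro ⟨n, hn, hnunit, hneq⟩
    refine ⟨fun t => γ t + r t • n t, hγ.add (hr.smul hn), fun t ht => ?_⟩
    have hsub : (fun t => γ t + r t • n t) t - γ t = r t • n t := by
      simp
    constructor
    · rw [hsub, norm_smul, Real.norm_eq_abs, abs_of_pos (hrpos t ht), hnunit t ht, mul_one]
    · have hγt := diffAt hIopen hγ ht
      have hrt := diffAt hIopen hr ht
      have hnt := diffAt hIopen hn ht
      have hF : HasDerivAt (fun t => γ t + r t • n t)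
          (deriv γ t + (r t • deriv n t + deriv r t • n t)) t :=
        hγt.hasDerivAt.add (hrt.hasDerivAt.smul hnt.hasDerivAt)
      rw [hsub, hF.deriv]
      -- inner products
      have hnn : dotp (n t) (n t) = 1 := by
        rw [dotp, real_inner_self_eq_norm_sq, hnunit t ht]; norm_num
      have hn'n : dotp (deriv n t) (n t) = 0 := by
        have hD : HasDerivAt (fun s => (inner ℝ (n s) (n s) : ℝ))
            (inner ℝ (n t) (deriv n t) + inner ℝ (deriv n t) (n t)) t :=
          HasDerivAt.inner ℝ hnt.hasDerivAt hnt.hasDerivAt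
        have heq : (fun s => (inner ℝ (n s) (n s) : ℝ)) =ᶠ[nhds t] (fun _ => (1:ℝ)) := by
          filter_upwards [hIopen.mem_nhds ht] with s hs
          rw [real_inner_self_eq_norm_sq, hnunit s hs]; norm_num
        have h0 : inner ℝ (n t) (deriv n t) + (inner ℝ (deriv n t) (n t) : ℝ) = 0 := by
          rw [← hD.deriv, heq.deriv_eq, deriv_const]
        have hcomm : (inner ℝ (n t) (deriv n t) : ℝ) = inner ℝ (deriv n t) (n t) :=
          real_inner_comm _ _
        rw [dotp]; linarith [h0, hcomm]
      have hγn : dotp (deriv γ t) (n t) = -(deriv r t) := by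
        have hkey := key (deriv γ t) (n t) (ν t) (hfrontal t ht) (hνunit t ht)
        rw [hkey]
        have := hneq t ht
        linarith [this]
      simp only [dotp, inner_add_left, real_inner_smul_left, real_inner_smul_right]
      have h1 : (inner ℝ (deriv γ t) (n t) : ℝ) = -(deriv r t) := hγn
      have h2 : (inner ℝ (n t) (n t) : ℝ) = 1 := hnn
      have h3 : (inner ℝ (deriv n t) (n t) : ℝ) = 0 := hn'n
      rw [h1, h2, h3]
      ring
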